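/- Let M be symmetric positive semidefinite in ℝ^{D×D} and let V̄ ∈ ℝ^{D×K} have orthonormal columns. Then for any R ∈ ℝ^{K×K}, ‖M − V̄ R Rᵀ V̄ᵀ‖_F² = ‖RRᵀ − V̄ᵀMV̄‖_F² + ‖M‖_F² − ‖V̄ᵀMV̄‖_F². In particular the minimum of R ↦ ‖M − V̄ R Rᵀ V̄ᵀ‖_F² over ℝ^{K×K} equals ‖M‖_F² − ‖V̄ᵀMV̄‖_F², attained exactly when RRᵀ = V̄ᵀMV̄. -/
import Mathlib


open Matrix

/-- Squared Frobenius norm of a real matrix. -/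
def frobSq {m n : Type*} [Fintype m] [Fintype n] (M : Matrix m n ℝ) : ℝ :=
  ∑ i, ∑ j, (M i j) ^ 2

lemma frobSq_eq_trace {m n : Type*} [Fintype m] [Fintype n] (A : Matrix m n ℝ) :
    frobSq A = (Aᵀ * A).trace := by
  simp only [frobSq, Matrix.trace, Matrix.diag, Matrix.mul_apply, Matrix.transpose_apply, sq]
  rw [Finset.sum_comm]

lemma frobSq_nonneg {m n : Type*} [Fintype m] [Fintype n] (A : Matrix m n ℝ) :
    0 ≤ frobSq A := by
  unfold frobSq
  positivity

lemma frobSq_eq_zero_iff {m n : Type*} [Fintype m] [Fintype n] (A : Matrix m n ℝ) :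
    frobSq A = 0 ↔ A = 0 := by
  constructor
  · intro h
    ext i j
    have h1 : ∀ i ∈ Finset.univ, (0:ℝ) ≤ ∑ j, (A i j)^2 := by
      intro i _; positivity
    have := (Finset.sum_eq_zero_iff_of_nonneg h1).mp h i (Finset.mem_univ i)
    have h2 : ∀ j ∈ Finset.univ, (0:ℝ) ≤ (A i j)^2 := by intro j _; positivity
    have := (Finset.sum_eq_zero_iff_of_nonneg h2).mp this j (Finset.mem_univ j)
    simpa using sq_eq_zero_iff.mp this
  · intro h; simp [h, frobSq]

lemma frobSq_sub {m n : Type*} [Fintype m] [Fintype n] (A B : Matrix m n ℝ) :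
    frobSq (A - B) = frobSq A - 2 * (Aᵀ * B).trace + frobSq B := by
  have hBA : (Bᵀ * A).trace = (Aᵀ * B).trace := by
    rw [← Matrix.trace_transpose (Bᵀ * A), Matrix.transpose_mul, Matrix.transpose_transpose]
  rw [frobSq_eq_trace, frobSq_eq_trace, frobSq_eq_trace, Matrix.transpose_sub,
    Matrix.sub_mul, Matrix.mul_sub, Matrix.mul_sub, Matrix.trace_sub, Matrix.trace_sub,
    Matrix.trace_sub, hBA]
  ring

lemma key_lemma {D K : ℕ} (M : Matrix (Fin D) (Fin D) ℝ) (hMsymm : Mᵀ = M)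
    (V : Matrix (Fin D) (Fin K) ℝ) (hV : Vᵀ * V = 1) (S : Matrix (Fin K) (Fin K) ℝ) :
    frobSq (M - V * S * Vᵀ) =
      frobSq (S - Vᵀ * M * V) + frobSq M - frobSq (Vᵀ * M * V) := by
  have hNsymm : (Vᵀ * M * V)ᵀ = Vᵀ * M * V := by
    rw [Matrix.transpose_mul, Matrix.transpose_mul, Matrix.transpose_transpose,
      hMsymm, Matrix.mul_assoc]
  have h1 : ((V * S * Vᵀ)ᵀ * (V * S * Vᵀ)).trace = (Sᵀ * S).trace := by
    have e : (V * S * Vᵀ)ᵀ * (V * S * Vᵀ) = V * (Sᵀ * S) * Vᵀ := by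
      rw [Matrix.transpose_mul, Matrix.transpose_mul, Matrix.transpose_transpose]
      simp only [Matrix.mul_assoc, ← Matrix.mul_assoc Vᵀ V, hV, Matrix.one_mul]
    rw [e, Matrix.trace_mul_cycle, ← Matrix.mul_assoc, hV, Matrix.one_mul]
  have h2 : (Mᵀ * (V * S * Vᵀ)).trace = (Sᵀ * (Vᵀ * M * V)).trace := by
    have e1 : Mᵀ * (V * S * Vᵀ) = (M * V) * S * Vᵀ := by
      rw [hMsymm]; simp only [Matrix.mul_assoc]
    rw [e1, Matrix.trace_mul_cycle]
    conv_lhs => rw [← Matrix.mul_assoc]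
    rw [← Matrix.trace_transpose (Sᵀ * (Vᵀ * M * V)), Matrix.transpose_mul,
      Matrix.transpose_transpose, hNsymm]
  have h3 : frobSq (V * S * Vᵀ) = frobSq S := by
    rw [frobSq_eq_trace, frobSq_eq_trace S, h1]
  rw [frobSq_sub, frobSq_sub, h2, h3]
  ring

theorem stmt_4 {D K : ℕ} (M : Matrix (Fin D) (Fin D) ℝ) (hM : M.PosSemidef)
    (V : Matrix (Fin D) (Fin K) ℝ) (hV : Vᵀ * V = 1) :
    (∀ R : Matrix (Fin K) (Fin K) ℝ,
      frobSq (M - V * R * Rᵀ * Vᵀ) =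
        frobSq (R * Rᵀ - Vᵀ * M * V) + frobSq M - frobSq (Vᵀ * M * V)) ∧
    (∀ R : Matrix (Fin K) (Fin K) ℝ,
      frobSq M - frobSq (Vᵀ * M * V) ≤ frobSq (M - V * R * Rᵀ * Vᵀ)) ∧
    (∀ R : Matrix (Fin K) (Fin K) ℝ,
      frobSq (M - V * R * Rᵀ * Vᵀ) = frobSq M - frobSq (Vᵀ * M * V) ↔
        R * Rᵀ = Vᵀ * M * V) := by
  have hMsymm : Mᵀ = M := by
    have := hM.1
    rwa [Matrix.IsHermitian, Matrix.conjTranspose_eq_transpose_of_trivial] at this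
  have key : ∀ R : Matrix (Fin K) (Fin K) ℝ,
      frobSq (M - V * R * Rᵀ * Vᵀ) =
        frobSq (R * Rᵀ - Vᵀ * M * V) + frobSq M - frobSq (Vᵀ * M * V) := by
    intro R
    have := key_lemma M hMsymm V hV (R * Rᵀ)
    rwa [← Matrix.mul_assoc] at this
  refine ⟨key, ?_, ?_⟩
  · intro R
    have := key R
    have h0 := frobSq_nonneg (R * Rᵀ - Vᵀ * M * V)
    linarith
  · intro R
    rw [key R]
    constructor
    · intro h
      have h0 : frobSq (R * Rᵀ - Vᵀ * M * V) = 0 := by linarith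
      exact sub_eq_zero.mp ((frobSq_eq_zero_iff _).mp h0)
    · intro h
      rw [h]
      simp [frobSq]
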